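/- Let A be a τ-algebra. The uniform structure U^A on Clo(A) coincides with the uniformity of pointwise convergence: for each k ≥ 1, the k-th component of U^A is the filter generated by the sets U_ā = {(f,g) ∈ Clo(A)² : f, g are k-ary and f(ā) = g(ā)} for ā ∈ A^k. -/

import Mathlib

/-! Universal-algebra preamble: functional signatures, algebras (with nonempty
carriers, as usual in universal algebra), terms, homomorphisms, congruences,
quotients, free algebras, and the operators/uniformities of the paper.

Families indexed over the components of a clone are indexed by `k : ℕ`, where
index `k` stands for the component of arity `k + 1` (so all arities `≥ 1`). -/

/-- A functional signature: a type of function symbols together with arities. -/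
structure Signature : Type 1 where
  F : Type
  arity : F → ℕ

/-- A τ-algebra: a nonempty carrier together with an interpretation of each symbol. -/
structure Alg (σ : Signature) : Type 1 where
  carrier : Type
  nonempty : Nonempty carrier
  op : ∀ f : σ.F, (Fin (σ.arity f) → carrier) → carrier

/-- Abstract τ-terms over the variables x_1, …, x_n. -/
inductive Trm (σ : Signature) (n : ℕ) : Type
  | var : Fin n → Trm σ n
  | app : ∀ f : σ.F, (Fin (σ.arity f) → Trm σ n) → Trm σ n

variable {σ : Signature}

/-- Evaluation of a term in an algebra under a valuation of the variables. -/
def Trm.eval {n : ℕ} (A : Alg σ) (v : Fin n → A.carrier) : Trm σ n → A.carrier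
  | .var i => v i
  | .app f ts => A.op f fun i => Trm.eval A v (ts i)

/-- The term operation `t^A` induced on `A` by the term `t`. -/
def termOp {n : ℕ} (A : Alg σ) (t : Trm σ n) : (Fin n → A.carrier) → A.carrier :=
  fun v => t.eval A v

/-- Homomorphisms of τ-algebras. -/
def IsHom (A B : Alg σ) (h : A.carrier → B.carrier) : Prop :=
  ∀ (f : σ.F) (x : Fin (σ.arity f) → A.carrier), h (A.op f x) = B.op f fun i => h (x i)

/-- Isomorphism of τ-algebras. -/
def Isomorphic (A B : Alg σ) : Prop :=
  ∃ h : A.carrier → B.carrier, IsHom A B h ∧ Function.Bijective h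

/-- Membership in the subuniverse generated by `S`. -/
inductive InClosure (A : Alg σ) (S : Set A.carrier) : A.carrier → Prop
  | base : ∀ a ∈ S, InClosure A S a
  | app : ∀ (f : σ.F) (x : Fin (σ.arity f) → A.carrier),
      (∀ i, InClosure A S (x i)) → InClosure A S (A.op f x)

/-- An algebra is finitely generated if a finite subset generates it. -/
def FinGen (A : Alg σ) : Prop :=
  ∃ S : Set A.carrier, S.Finite ∧ ∀ a, InClosure A S a

/-- Product of a family of algebras. -/
def PiAlg {ι : Type} (A : ι → Alg σ) : Alg σ where
  carrier := ∀ i, (A i).carrier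
  nonempty := ⟨fun i => Classical.choice (A i).nonempty⟩
  op f x := fun i => (A i).op f fun j => x j i

/-- A congruence: an equivalence relation compatible with all operations. -/
def IsCongruence (A : Alg σ) (r : A.carrier → A.carrier → Prop) : Prop :=
  Equivalence r ∧ ∀ (f : σ.F) (x y : Fin (σ.arity f) → A.carrier),
    (∀ i, r (x i) (y i)) → r (A.op f x) (A.op f y)

/-- Bundled congruences on an algebra. -/
structure Cong (A : Alg σ) : Type where
  r : A.carrier → A.carrier → Prop
  iscon : IsCongruence A r

/-- The quotient algebra of `A` by (a relation which is intended to be) a congruence. -/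
noncomputable def quotAlg (A : Alg σ) (r : A.carrier → A.carrier → Prop) : Alg σ where
  carrier := Quot r
  nonempty := ⟨Quot.mk r (Classical.choice A.nonempty)⟩
  op f x := Quot.mk r (A.op f fun i => (x i).out)

/-- The subalgebra of `A` on a nonempty subset closed under the operations. -/
def subAlg (A : Alg σ) (S : Set A.carrier) (hne : S.Nonempty)
    (hcl : ∀ (f : σ.F) (x : Fin (σ.arity f) → A.carrier), (∀ i, x i ∈ S) → A.op f x ∈ S) :
    Alg σ where
  carrier := {a : A.carrier // a ∈ S}
  nonempty := ⟨⟨hne.choose, hne.choose_spec⟩⟩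
  op f x := ⟨A.op f fun i => (x i).1, hcl f _ fun i => (x i).2⟩

/-- The subalgebra of `A` generated by a nonempty subset `S`. -/
def genSubAlg (A : Alg σ) (S : Set A.carrier) (hne : S.Nonempty) : Alg σ where
  carrier := {a : A.carrier // InClosure A S a}
  nonempty := ⟨⟨hne.choose, InClosure.base _ hne.choose_spec⟩⟩
  op f x := ⟨A.op f fun i => (x i).1, InClosure.app f _ fun i => (x i).2⟩

/-- H: homomorphic images of members of `K`. -/
def Hcl (K : Set (Alg σ)) : Set (Alg σ) :=
  {B | ∃ A ∈ K, ∃ h : A.carrier → B.carrier, IsHom A B h ∧ Function.Surjective h}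

/-- I: isomorphic copies of members of `K`. -/
def Icl (K : Set (Alg σ)) : Set (Alg σ) := {B | ∃ A ∈ K, Isomorphic A B}

/-- S: isomorphic copies of subalgebras (i.e. algebras embedding into members) of `K`. -/
def Scl (K : Set (Alg σ)) : Set (Alg σ) :=
  {B | ∃ A ∈ K, ∃ e : B.carrier → A.carrier, IsHom B A e ∧ Function.Injective e}

/-- P_f: isomorphic copies of finite (nonempty) products of members of `K`. -/
def Pfcl (K : Set (Alg σ)) : Set (Alg σ) :=
  {B | ∃ (n : ℕ) (A : Fin (n + 1) → Alg σ), (∀ i, A i ∈ K) ∧ Isomorphic (PiAlg A) B}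

/-- S_f: isomorphic copies of finitely generated subalgebras of members of `K`. -/
def Sf (K : Set (Alg σ)) : Set (Alg σ) :=
  {B | FinGen B ∧ ∃ A ∈ K, ∃ e : B.carrier → A.carrier, IsHom B A e ∧ Function.Injective e}

/-- S P_f: isomorphic copies of finitely generated subalgebras of finite products
of members of `K`. -/
def SPf (K : Set (Alg σ)) : Set (Alg σ) :=
  {B | FinGen B ∧ ∃ (n : ℕ) (A : Fin (n + 1) → Alg σ), (∀ i, A i ∈ K) ∧
    ∃ e : B.carrier → (PiAlg A).carrier, IsHom B (PiAlg A) e ∧ Function.Injective e}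

/-- A pseudovariety of finitely generated algebras: a class of finitely generated
algebras closed under homomorphic images and under isomorphic copies of finitely
generated subalgebras of finite products of its members. -/
def IsPseudovarietyFG (C : Set (Alg σ)) : Prop :=
  (∀ A ∈ C, FinGen A) ∧ Hcl C ⊆ C ∧ SPf C ⊆ C

/-- A pseudovariety of finite algebras: a class of finite algebras closed under
finite products, subalgebras and homomorphic images. -/
def IsPseudovarietyFin (C : Set (Alg σ)) : Prop :=
  (∀ A ∈ C, Finite A.carrier) ∧ Hcl C ⊆ C ∧ Scl C ⊆ C ∧ Pfcl C ⊆ C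

/-- A variety: a class closed under arbitrary products, subalgebras and
homomorphic images. -/
def IsVariety (V : Set (Alg σ)) : Prop :=
  (∀ (ι : Type) (A : ι → Alg σ), (∀ i, A i ∈ V) → PiAlg A ∈ V) ∧
  Scl V ⊆ V ∧ Hcl V ⊆ V

/-- The identities of the class `C`: `s` and `t` are identified iff they induce the
same operation on every member of `C`. -/
def FreeCon (C : Set (Alg σ)) (n : ℕ) : Trm σ n → Trm σ n → Prop :=
  fun s t => ∀ A ∈ C, ∀ v : Fin n → A.carrier, s.eval A v = t.eval A v

/-- `freeAlg C k` is `F_{k+1}^C`, the free algebra for `C` on `k + 1` generators: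
the term algebra on the variables `x_1, …, x_{k+1}` modulo the identities of `C`.
(The index `k` stands for arity `k + 1`, so all components have arity `≥ 1`.) -/
noncomputable def freeAlg (C : Set (Alg σ)) (k : ℕ) : Alg σ where
  carrier := Quot (FreeCon C (k + 1))
  nonempty := ⟨Quot.mk _ (Trm.var 0)⟩
  op f x := Quot.mk _ (Trm.app f fun i => (x i).out)

/-- The finitely generated members of `V`. -/
def Vfg (V : Set (Alg σ)) : Set (Alg σ) := {A | A ∈ V ∧ FinGen A}

/-- `B^K`: the congruences of the free algebras whose quotient is isomorphic to a
member of `K`. -/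
def BK (V K : Set (Alg σ)) (k : ℕ) : Set (Cong (freeAlg V k)) :=
  {θ | quotAlg (freeAlg V k) θ.r ∈ Icl K}

/-- `K^B`: isomorphic copies of the quotients of free algebras by congruences in `B`. -/
def KB (V : Set (Alg σ)) (B : ∀ k : ℕ, Set (Cong (freeAlg V k))) : Set (Alg σ) :=
  Icl {A | ∃ (k : ℕ), ∃ θ ∈ B k, A = quotAlg (freeAlg V k) θ.r}

/-- `θ/t̄`: the inverse substitution of the congruence `θ` along the tuple `t̄`;
`s (θ/t̄) s'` iff `s(t₁,…,t_m) θ s'(t₁,…,t_m)`. -/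
noncomputable def conSubstRel {V : Set (Alg σ)} {k : ℕ} (θ : Cong (freeAlg V k)) {m : ℕ}
    (t : Fin (m + 1) → (freeAlg V k).carrier) :
    (freeAlg V m).carrier → (freeAlg V m).carrier → Prop :=
  fun s s' => θ.r (Trm.eval (freeAlg V k) t s.out) (Trm.eval (freeAlg V k) t s'.out)

/-- A family of congruences is closed under inverse substitution. -/
def InvSubstClosed (V : Set (Alg σ)) (B : ∀ k : ℕ, Set (Cong (freeAlg V k))) : Prop :=
  ∀ (k m : ℕ), ∀ θ ∈ B k, ∀ t : Fin (m + 1) → (freeAlg V k).carrier,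
    ∃ θ' ∈ B m, θ'.r = conSubstRel θ t

/-- A family of congruences is closed under finite intersections (componentwise). -/
def InterClosed (V : Set (Alg σ)) (B : ∀ k : ℕ, Set (Cong (freeAlg V k))) : Prop :=
  ∀ (k n : ℕ) (θs : Fin (n + 1) → Cong (freeAlg V k)), (∀ i, θs i ∈ B k) →
    ∃ θ' ∈ B k, θ'.r = fun a b => ∀ i, (θs i).r a b

/-- A family of congruences is upward closed (componentwise). -/
def UpClosed (V : Set (Alg σ)) (B : ∀ k : ℕ, Set (Cong (freeAlg V k))) : Prop :=
  ∀ (k : ℕ), ∀ θ ∈ B k, ∀ ψ : Cong (freeAlg V k), (∀ a b, θ.r a b → ψ.r a b) → ψ ∈ B k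

/-- A filter on `X × X` is a uniformity: every entourage contains the diagonal, the
converse of an entourage is an entourage, and the generalised triangle inequality. -/
def IsUniformity {X : Type} (u : Filter (X × X)) : Prop :=
  (∀ U ∈ u, ∀ x : X, (x, x) ∈ U) ∧
  (∀ U ∈ u, {p : X × X | (p.2, p.1) ∈ U} ∈ u) ∧
  (∀ U ∈ u, ∃ W ∈ u, ∀ x y z : X, (x, y) ∈ W → (y, z) ∈ W → (x, z) ∈ U)

/-- `U^C` (the component of index `k`, i.e. of arity `k + 1`): the filter on
`F_{k+1}^V × F_{k+1}^V` generated by the congruences `θ` of `F_{k+1}^V` such that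
`F_{k+1}^V/θ` is isomorphic to a member of `C`. -/
noncomputable def unifC (V C : Set (Alg σ)) (k : ℕ) :
    Filter ((freeAlg V k).carrier × (freeAlg V k).carrier) :=
  Filter.generate
    {U | ∃ θ : Cong (freeAlg V k), quotAlg (freeAlg V k) θ.r ∈ Icl C ∧ U = {p | θ.r p.1 p.2}}

/-- The `(k+1)`-ary part of `Clo(A)`: the `(k+1)`-ary term operations of `A`. -/
def CloK (A : Alg σ) (k : ℕ) : Type :=
  {g : (Fin (k + 1) → A.carrier) → A.carrier // ∃ t : Trm σ (k + 1), g = termOp A t}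

/-- The uniformity of pointwise convergence on the `(k+1)`-ary part of `Clo(A)`:
generated by the sets `U_ā = {(f, g) | f(ā) = g(ā)}`. -/
noncomputable def ptwUnif (A : Alg σ) (k : ℕ) : Filter (CloK A k × CloK A k) :=
  Filter.generate {U | ∃ a : Fin (k + 1) → A.carrier, U = {p | p.1.1 a = p.2.1 a}}

/-- The natural map from the free algebra for `C` onto `Clo(A)`, sending the class
of a term `t` to the term operation `t^A`. -/
noncomputable def natMap (C : Set (Alg σ)) (A : Alg σ) (k : ℕ) :
    (freeAlg C k).carrier → CloK A k :=
  fun q => ⟨termOp A q.out, q.out, rfl⟩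

/-- The natural map between the free algebras of two classes (class of `t` to
class of `t`). -/
noncomputable def freeNatMap (C D : Set (Alg σ)) (k : ℕ) :
    (freeAlg C k).carrier → (freeAlg D k).carrier :=
  fun q => Quot.mk _ q.out

/-- The natural map `Clo(A) → Clo(B)`, sending `t^A` to `t^B`. -/
noncomputable def cloNatMap (A B : Alg σ) (k : ℕ) : CloK A k → CloK B k :=
  fun g => ⟨termOp B (Classical.choose g.2), Classical.choose g.2, rfl⟩

/-- The variety generated by `A`. -/
def varietyGen (A : Alg σ) : Set (Alg σ) :=
  {B | ∀ V : Set (Alg σ), IsVariety V → A ∈ V → B ∈ V}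

/-- The pseudovariety generated by `A`: the smallest class containing `A` closed
under finite products, subalgebras and homomorphic images. -/
def psvGen (A : Alg σ) : Set (Alg σ) :=
  {B | ∀ C : Set (Alg σ), A ∈ C → Hcl C ⊆ C → Scl C ⊆ C → Pfcl C ⊆ C → B ∈ C}

/-- The pseudovariety of finitely generated algebras generated by `A`: the finitely
generated members of the pseudovariety generated by `A`. -/
def psvFgGen (A : Alg σ) : Set (Alg σ) := {B | FinGen B ∧ B ∈ psvGen A}

/-! When `A` lies in the class `C`, evaluation at a tuple `ā` of `A` is a homomorphism from
the free algebra `F_{k+1}^C` to `A`; its kernel is a congruence whose quotient embeds into `A`,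
so every pointwise entourage `U_ā` is an entourage of `U^A`. Conversely, a finitely generated
member of the pseudovariety generated by `A` is a homomorphic image `φ(S)` of a subalgebra `S`
of a finite power `A^ι`. If `F_{k+1}/θ` is such an image, lift the generators `x̄/θ` to `s̄` in
`S`; the coordinates `(s̄)_j`, `j ∈ ι`, are finitely many tuples of `A`, and two terms agreeing
at all of them have the same value at `s̄`, hence are `θ`-related. -/

section Homomorphisms

theorem IsHom.comp {A B C : Alg σ} {g : B.carrier → C.carrier} {h : A.carrier → B.carrier}
    (hg : IsHom B C g) (hh : IsHom A B h) : IsHom A C (g ∘ h) := by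
  intro f x
  simp only [Function.comp_apply, hh f x, hg f]

theorem isHom_id (A : Alg σ) : IsHom A A id := fun _ _ => rfl

theorem Isomorphic.refl (A : Alg σ) : Isomorphic A A := ⟨id, isHom_id A, Function.bijective_id⟩

theorem IsHom.eval {A B : Alg σ} {h : A.carrier → B.carrier} (hh : IsHom A B h) {n : ℕ}
    (v : Fin n → A.carrier) :
    ∀ t : Trm σ n, h (t.eval A v) = t.eval B (h ∘ v)
  | .var _ => rfl
  | .app f ts => (hh f _).trans (congrArg _ (funext fun i => hh.eval v (ts i)))

theorem PiAlg.eval_apply {ι : Type} (A : ι → Alg σ) {n : ℕ} (v : Fin n → (PiAlg A).carrier)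
    (i : ι) : ∀ t : Trm σ n, t.eval (PiAlg A) v i = t.eval (A i) (fun j => v j i)
  | .var _ => rfl
  | .app _ ts => congrArg _ (funext fun j => PiAlg.eval_apply A v i (ts j))

theorem InClosure.image {A B : Alg σ} {h : A.carrier → B.carrier} (hh : IsHom A B h)
    {S : Set A.carrier} {a : A.carrier} (ha : InClosure A S a) : InClosure B (h '' S) (h a) := by
  induction ha with
  | base a ha => exact .base _ ⟨a, ha, rfl⟩
  | app f x _ ih => exact hh f x ▸ .app _ _ ih

theorem FinGen.of_surjective {A B : Alg σ} (hA : FinGen A) {h : A.carrier → B.carrier}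
    (hh : IsHom A B h) (hsurj : Function.Surjective h) : FinGen B := by
  obtain ⟨S, hS, hgen⟩ := hA
  refine ⟨h '' S, hS.image h, fun b => ?_⟩
  obtain ⟨a, rfl⟩ := hsurj b
  exact (hgen a).image hh

end Homomorphisms

section Congruences

theorem Cong.rel_of_mk_eq {B : Alg σ} (θ : Cong B) {x y : B.carrier}
    (h : Quot.mk θ.r x = Quot.mk θ.r y) : θ.r x y :=
  θ.iscon.1.eqvGen_iff.mp (Quot.eqvGen_exact h)

theorem Cong.out_mk_rel {B : Alg σ} (θ : Cong B) (x : B.carrier) :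
    θ.r (Quot.mk θ.r x).out x :=
  θ.rel_of_mk_eq (Quot.out_eq _)

theorem Cong.isHom_mk {B : Alg σ} (θ : Cong B) : IsHom B (quotAlg B θ.r) (Quot.mk θ.r) :=
  fun f x => Quot.sound (θ.iscon.2 f _ _ fun i => θ.iscon.1.symm (θ.out_mk_rel (x i)))

def kerCong {B A : Alg σ} {h : B.carrier → A.carrier} (hh : IsHom B A h) : Cong B where
  r x y := h x = h y
  iscon := ⟨⟨fun _ => rfl, Eq.symm, Eq.trans⟩,
    fun f x y hxy => (hh f x).trans ((congrArg _ (funext hxy)).trans (hh f y).symm)⟩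

theorem isHom_kerLift {B A : Alg σ} {h : B.carrier → A.carrier} (hh : IsHom B A h) :
    IsHom (quotAlg B (kerCong hh).r) A (Quot.lift h fun _ _ => id) := by
  intro f x
  refine (hh f _).trans (congrArg _ (funext fun i => ?_))
  conv_rhs => rw [← Quot.out_eq (x i)]

theorem kerLift_injective {B A : Alg σ} {h : B.carrier → A.carrier} (hh : IsHom B A h) :
    Function.Injective (Quot.lift h fun _ _ => id : (quotAlg B (kerCong hh).r).carrier → _) := by
  rintro ⟨x⟩ ⟨y⟩ hxy
  exact Quot.sound hxy

end Congruences

section FreeAlgebras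

variable {C : Set (Alg σ)}

theorem freeCon_equivalence (C : Set (Alg σ)) (n : ℕ) : Equivalence (FreeCon C n) :=
  ⟨fun _ _ _ _ => rfl, fun h B hB v => (h B hB v).symm,
    fun h₁ h₂ B hB v => (h₁ B hB v).trans (h₂ B hB v)⟩

theorem freeCon_out_mk (C : Set (Alg σ)) {n : ℕ} (t : Trm σ n) :
    FreeCon C n (Quot.mk (FreeCon C n) t).out t :=
  (freeCon_equivalence C n).eqvGen_iff.mp (Quot.eqvGen_exact (Quot.out_eq _))

theorem freeAlg_op_mk (C : Set (Alg σ)) (k : ℕ) (f : σ.F) (ts : Fin (σ.arity f) → Trm σ (k + 1)) :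
    (freeAlg C k).op f (fun i => Quot.mk _ (ts i)) = Quot.mk _ (Trm.app f ts) :=
  Quot.sound fun B hB v => congrArg (B.op f) (funext fun i => freeCon_out_mk C (ts i) B hB v)

theorem freeAlg_eval_vars (C : Set (Alg σ)) (k : ℕ) :
    ∀ t : Trm σ (k + 1), t.eval (freeAlg C k) (fun i => Quot.mk _ (.var i)) = Quot.mk _ t
  | .var _ => rfl
  | .app f ts => by
      change (freeAlg C k).op f (fun i => (ts i).eval (freeAlg C k) _) = _
      simp only [freeAlg_eval_vars C k]
      exact freeAlg_op_mk C k f ts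

theorem finGen_freeAlg (C : Set (Alg σ)) (k : ℕ) : FinGen (freeAlg C k) := by
  refine ⟨Set.range fun i => Quot.mk _ (.var i), Set.finite_range _, ?_⟩
  rintro ⟨t⟩
  rw [← freeAlg_eval_vars C k t]
  induction t with
  | var i => exact .base _ ⟨i, rfl⟩
  | app f ts ih => exact .app f _ ih

theorem finGen_quotAlg_freeAlg {k : ℕ} (θ : Cong (freeAlg C k)) :
    FinGen (quotAlg (freeAlg C k) θ.r) :=
  (finGen_freeAlg C k).of_surjective θ.isHom_mk Quot.mk_surjective

theorem quotAlg_freeAlg_eval_vars {k : ℕ} (θ : Cong (freeAlg C k)) (t : Trm σ (k + 1)) :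
    t.eval (quotAlg (freeAlg C k) θ.r) (fun i => Quot.mk θ.r (Quot.mk _ (.var i))) =
      Quot.mk θ.r (Quot.mk _ t) :=
  (θ.isHom_mk.eval _ t).symm.trans (congrArg _ (freeAlg_eval_vars C k t))

noncomputable def evalAt {k : ℕ} {A : Alg σ} (a : Fin (k + 1) → A.carrier) :
    (freeAlg C k).carrier → A.carrier :=
  fun p => p.out.eval A a

theorem isHom_evalAt {A : Alg σ} (hA : A ∈ C) {k : ℕ} (a : Fin (k + 1) → A.carrier) :
    IsHom (freeAlg C k) A (evalAt a) :=
  fun f x => freeCon_out_mk C (.app f fun i => (x i).out) A hA a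

end FreeAlgebras

section Pseudovarieties

theorem Hcl_Hcl_subset (K : Set (Alg σ)) : Hcl (Hcl K) ⊆ Hcl K := by
  rintro B ⟨D, ⟨A, hA, h, hh, hsurj⟩, g, hg, gsurj⟩
  exact ⟨A, hA, g ∘ h, hg.comp hh, gsurj.comp hsurj⟩

theorem Scl_Scl_subset (K : Set (Alg σ)) : Scl (Scl K) ⊆ Scl K := by
  rintro B ⟨D, ⟨A, hA, e, he, einj⟩, g, hg, ginj⟩
  exact ⟨A, hA, e ∘ g, he.comp hg, einj.comp ginj⟩

theorem Hcl_mono {K L : Set (Alg σ)} (hKL : K ⊆ L) : Hcl K ⊆ Hcl L := by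
  rintro B ⟨A, hA, h⟩
  exact ⟨A, hKL hA, h⟩

/-- A subalgebra of a homomorphic image `φ(A)` is the image of the subalgebra `φ⁻¹(B)` of `A`. -/
theorem Scl_Hcl_subset (K : Set (Alg σ)) : Scl (Hcl K) ⊆ Hcl (Scl K) := by
  rintro B ⟨D, ⟨A, hA, φ, hφ, φsurj⟩, e, he, einj⟩
  let T : Set A.carrier := {a | ∃ b, φ a = e b}
  have hT : ∀ a (ha : a ∈ T), φ a = e ha.choose := fun _ ha => ha.choose_spec
  have hne : T.Nonempty := by
    obtain ⟨b⟩ := B.nonempty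
    obtain ⟨a, ha⟩ := φsurj (e b)
    exact ⟨a, b, ha⟩
  have hcl : ∀ (f : σ.F) (x : Fin (σ.arity f) → A.carrier), (∀ i, x i ∈ T) → A.op f x ∈ T :=
    fun f x hx => ⟨B.op f fun i => (hx i).choose, by
      rw [hφ, he]
      exact congrArg _ (funext fun i => (hx i).choose_spec)⟩
  refine ⟨subAlg A T hne hcl, ⟨A, hA, Subtype.val, fun _ _ => rfl, Subtype.val_injective⟩,
    fun a => a.2.choose, fun f x => einj ?_, fun b => ?_⟩
  · exact (hT _ _).symm.trans ((hφ f _).trans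
      ((congrArg _ (funext fun i => hT _ (x i).2)).trans (he f _).symm))
  · obtain ⟨a, ha⟩ := φsurj (e b)
    exact ⟨⟨a, b, ha⟩, einj ((hT a ⟨b, ha⟩).symm.trans ha)⟩

def finPowers (A : Alg σ) : Set (Alg σ) :=
  {P | ∃ ι : Type, Finite ι ∧ P = PiAlg fun _ : ι => A}

theorem mem_Scl_finPowers {A B : Alg σ} : B ∈ Scl (finPowers A) ↔
    ∃ (ι : Type) (_ : Finite ι) (e : B.carrier → ι → A.carrier),
      IsHom B (PiAlg fun _ : ι => A) e ∧ Function.Injective e := by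
  constructor
  · rintro ⟨_, ⟨ι, hι, rfl⟩, e, he, einj⟩
    exact ⟨ι, hι, e, he, einj⟩
  · rintro ⟨ι, hι, e, he, einj⟩
    exact ⟨_, ⟨ι, hι, rfl⟩, e, he, einj⟩

def HSPfin (A : Alg σ) : Set (Alg σ) := Hcl (Scl (finPowers A))

theorem self_mem_HSPfin (A : Alg σ) : A ∈ HSPfin A :=
  ⟨A, mem_Scl_finPowers.2 ⟨Unit, inferInstance, fun a _ => a, fun _ _ => rfl,
    fun _ _ h => congrFun h ()⟩, id, isHom_id A, Function.surjective_id⟩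

theorem Hcl_HSPfin_subset (A : Alg σ) : Hcl (HSPfin A) ⊆ HSPfin A :=
  Hcl_Hcl_subset _

theorem Scl_HSPfin_subset (A : Alg σ) : Scl (HSPfin A) ⊆ HSPfin A :=
  (Scl_Hcl_subset _).trans (Hcl_mono (Scl_Scl_subset _))

/-- `∏ᵢ φᵢ(Sᵢ)` is the image of `∏ᵢ Sᵢ`, which embeds into `A^(Σᵢ ιᵢ)`. -/
theorem Pfcl_HSPfin_subset (A : Alg σ) : Pfcl (HSPfin A) ⊆ HSPfin A := by
  rintro B ⟨n, D, hD, ψ, hψ, ψbij⟩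
  choose S hS φ hφ φsurj using hD
  choose ι hι e he einj using fun i => mem_Scl_finPowers.1 (hS i)
  refine ⟨PiAlg S, mem_Scl_finPowers.2 ⟨Σ i, ι i, inferInstance, fun s p => e p.1 (s p.1) p.2,
    fun f x => funext fun p => congrFun (he p.1 f fun l => x l p.1) p.2,
    fun s s' h => funext fun i => einj i (funext fun j => congrFun h ⟨i, j⟩)⟩,
    ψ ∘ fun s i => φ i (s i), hψ.comp fun f x => funext fun i => hφ i f fun l => x l i,
    ψbij.surjective.comp fun d => ⟨fun i => (φsurj i (d i)).choose,
      funext fun i => (φsurj i (d i)).choose_spec⟩⟩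

theorem psvGen_subset_HSPfin (A : Alg σ) : psvGen A ⊆ HSPfin A :=
  fun _ hB => hB _ (self_mem_HSPfin A) (Hcl_HSPfin_subset A) (Scl_HSPfin_subset A)
    (Pfcl_HSPfin_subset A)

theorem Icl_psvFgGen_subset_HSPfin (A : Alg σ) : Icl (psvFgGen A) ⊆ HSPfin A := by
  rintro B ⟨D, ⟨-, hD⟩, h, hh, hbij⟩
  exact Hcl_HSPfin_subset A ⟨D, psvGen_subset_HSPfin A hD, h, hh, hbij.surjective⟩

theorem mem_psvGen_of_embedding {A B : Alg σ} {e : B.carrier → A.carrier} (he : IsHom B A e)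
    (einj : Function.Injective e) : B ∈ psvGen A :=
  fun _ hA _ hS _ => hS ⟨A, hA, e, he, einj⟩

end Pseudovarieties

theorem exists_finite_evalAt_of_mem_HSPfin {C : Set (Alg σ)} {A : Alg σ} {k : ℕ}
    {θ : Cong (freeAlg C k)} (hθ : quotAlg (freeAlg C k) θ.r ∈ HSPfin A) :
    ∃ (ι : Type) (_ : Finite ι) (a : ι → Fin (k + 1) → A.carrier),
      ∀ p q, (∀ j, evalAt (a j) p = evalAt (a j) q) → θ.r p q := by
  obtain ⟨S, hS, φ, hφ, φsurj⟩ := hθ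
  obtain ⟨ι, hι, e, he, einj⟩ := mem_Scl_finPowers.1 hS
  choose s hs using fun i => φsurj (Quot.mk θ.r (Quot.mk _ (.var i)))
  refine ⟨ι, hι, fun j i => e (s i) j, fun p q hpq => θ.rel_of_mk_eq ?_⟩
  have hφs : ∀ p : (freeAlg C k).carrier, φ (p.out.eval S s) = Quot.mk θ.r p := fun p => by
    rw [hφ.eval, show φ ∘ s = _ from funext hs, quotAlg_freeAlg_eval_vars]
    exact congrArg _ (Quot.out_eq p)
  have hes : e (p.out.eval S s) = e (q.out.eval S s) := funext fun j => by
    rw [he.eval, he.eval, PiAlg.eval_apply, PiAlg.eval_apply]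
    exact hpq j
  rw [← hφs, ← hφs, einj hes]

/-- Proposition 7 of the paper. For a τ-algebra `A`, the
uniformity `U^A` on `Clo(A)` (identified with `F^V` for `V` the variety generated
by `A`) coincides with the uniformity of pointwise convergence: its component of
each arity is the filter generated by the sets
`U_ā = {(f, g) | f, g k-ary, f(ā) = g(ā)}`. -/
theorem UA_eq_pointwise {σ : Signature} (A : Alg σ) (k : ℕ) :
    unifC (varietyGen A) (psvFgGen A) k =
      Filter.generate {U | ∃ a : Fin (k + 1) → A.carrier,
        U = {p : (freeAlg (varietyGen A) k).carrier × (freeAlg (varietyGen A) k).carrier |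
              Trm.eval A a p.1.out = Trm.eval A a p.2.out}} := by
  apply le_antisymm
  · rw [Filter.le_generate_iff]
    rintro _ ⟨a, rfl⟩
    have hA : A ∈ varietyGen A := fun _ _ hA => hA
    have hev := isHom_evalAt hA a
    exact Filter.mem_generate_of_mem ⟨kerCong hev, ⟨_, ⟨finGen_quotAlg_freeAlg _,
      mem_psvGen_of_embedding (isHom_kerLift hev) (kerLift_injective hev)⟩, .refl _⟩, rfl⟩
  · rw [unifC, Filter.le_generate_iff]
    rintro _ ⟨θ, hθ, rfl⟩
    obtain ⟨ι, _, a, ha⟩ := exists_finite_evalAt_of_mem_HSPfin (Icl_psvFgGen_subset_HSPfin A hθ)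
    refine Filter.mem_of_superset
      (Filter.iInter_mem.2 fun j => Filter.mem_generate_of_mem ⟨a j, rfl⟩) fun p hp => ?_
    exact ha p.1 p.2 (Set.mem_iInter.1 hp)
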